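/- The minimum of Σ_{i=1}^m f_i(r_i) + Σ_{j=1}^n g_j(c_j) over all monotone A ∈ {0,1}^{m×n} with row sums r and column sums c equals the minimum of the same expression over all pairs of nonincreasing tuples (r, c) with c_1 ≤ m such that r is majorized by the conjugate of c. -/
import Mathlib


/-- Row sums of a matrix. -/
def rowSum {m n : ℕ} (A : Matrix (Fin m) (Fin n) ℕ) (i : Fin m) : ℕ := ∑ j, A i j

/-- Column sums of a matrix. -/
def colSum {m n : ℕ} (A : Matrix (Fin m) (Fin n) ℕ) (j : Fin n) : ℕ := ∑ i, A i j

/-- A (0,1)-matrix. -/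
def ZeroOne {m n : ℕ} (A : Matrix (Fin m) (Fin n) ℕ) : Prop := ∀ i j, A i j ≤ 1

/-- A matrix is monotone if its row sums and column sums are nonincreasing. -/
def MonotoneMat {m n : ℕ} (A : Matrix (Fin m) (Fin n) ℕ) : Prop :=
  Antitone (rowSum A) ∧ Antitone (colSum A)

/-- The conjugate of the tuple `c`, with respect to bound `m`:
`s i = |{j : c j ≥ i}|` where `i` is read 1-indexed (so `i : Fin m` stands for `i+1`). -/
def conjTuple (m : ℕ) {n : ℕ} (c : Fin n → ℕ) (i : Fin m) : ℕ :=
  (Finset.univ.filter (fun j => (i : ℕ) + 1 ≤ c j)).card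

/-- `r` is majorized by `s`: partial sums of `r` are dominated by those of `s`,
with equal total sums. -/
def MajorizedBy {m : ℕ} (r s : Fin m → ℕ) : Prop :=
  (∀ h : Fin m, ∑ i ∈ Finset.Iic h, r i ≤ ∑ i ∈ Finset.Iic h, s i) ∧
  (∑ i, r i = ∑ i, s i)

/-- The type of a tuple: the number of distinct nonzero values among its components. -/
def tupleType {n : ℕ} (c : Fin n → ℕ) : ℕ :=
  ((Finset.univ.image c).filter (fun x => x ≠ 0)).card

-- card of an initial segment of Fin m
lemma cardLt (m u : ℕ) (hu : u ≤ m) :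
    (Finset.univ.filter (fun i : Fin m => (i : ℕ) < u)).card = u := by
  rw [Finset.card_filter, Fin.sum_univ_eq_sum_range (fun i => if i < u then (1:ℕ) else 0),
    ← Finset.card_filter]
  have : (Finset.range m).filter (fun i => i < u) = Finset.range u := by
    ext x; simp only [Finset.mem_filter, Finset.mem_range]; omega
  rw [this, Finset.card_range]

lemma total_eq {m n : ℕ} (A : Matrix (Fin m) (Fin n) ℕ) :
    ∑ i, rowSum A i = ∑ j, colSum A j := Finset.sum_comm

lemma conj_as_sum (m : ℕ) {n : ℕ} (c : Fin n → ℕ) (i : Fin m) :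
    conjTuple m c i = ∑ j, if (i : ℕ) + 1 ≤ c j then 1 else 0 :=
  Finset.card_filter _ _

lemma conj_total (m : ℕ) {n : ℕ} (c : Fin n → ℕ) (hc : ∀ j, c j ≤ m) :
    ∑ i, conjTuple m c i = ∑ j, c j := by
  simp only [conj_as_sum]
  rw [Finset.sum_comm]
  refine Finset.sum_congr rfl fun j _ => ?_
  rw [← Finset.card_filter]
  have h2 : Finset.univ.filter (fun i : Fin m => (i:ℕ) + 1 ≤ c j)
      = Finset.univ.filter (fun i : Fin m => (i:ℕ) < c j) := by
    ext x; simp only [Finset.mem_filter, Finset.mem_univ, true_and]; omega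
  rw [h2, cardLt m (c j) (hc j)]

lemma conj_antitone (m : ℕ) {n : ℕ} (c : Fin n → ℕ) : Antitone (conjTuple m c) := by
  intro a b hab
  apply Finset.card_le_card
  intro j hj
  simp only [Finset.mem_filter, Finset.mem_univ, true_and] at *
  have hab' : (a:ℕ) ≤ (b:ℕ) := hab
  omega


lemma colSum_le {m n : ℕ} (A : Matrix (Fin m) (Fin n) ℕ) (hA : ZeroOne A) (j : Fin n) :
    colSum A j ≤ m := by
  calc colSum A j ≤ ∑ _i : Fin m, 1 := Finset.sum_le_sum fun i _ => hA i j
  _ = m := by simp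

lemma matrix_majorized {m n : ℕ} (A : Matrix (Fin m) (Fin n) ℕ) (hA : ZeroOne A) :
    MajorizedBy (rowSum A) (conjTuple m (colSum A)) := by
  constructor
  · intro h
    have key : ∀ j, ∑ i ∈ Finset.Iic h, A i j
        ≤ ∑ i ∈ Finset.Iic h, (if (i:ℕ) + 1 ≤ colSum A j then 1 else 0) := by
      intro j
      rw [← Finset.card_filter]
      have hcard : ((Finset.Iic h).filter (fun i : Fin m => (i:ℕ) + 1 ≤ colSum A j)).card
          = min ((h:ℕ)+1) (colSum A j) := by
        have he : (Finset.Iic h).filter (fun i : Fin m => (i:ℕ) + 1 ≤ colSum A j)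
            = Finset.univ.filter (fun i : Fin m => (i:ℕ) < min ((h:ℕ)+1) (colSum A j)) := by
          ext x
          simp only [Finset.mem_filter, Finset.mem_Iic, Finset.mem_univ, true_and, Fin.le_def]
          omega
        rw [he, cardLt]
        have : (h:ℕ) < m := h.isLt
        omega
      rw [hcard]
      have h1 : ∑ i ∈ Finset.Iic h, A i j ≤ (h:ℕ) + 1 := by
        calc ∑ i ∈ Finset.Iic h, A i j ≤ ∑ _i ∈ Finset.Iic h, 1 :=
              Finset.sum_le_sum fun i _ => hA i j
          _ = (h:ℕ) + 1 := by rw [Finset.sum_const, Fin.card_Iic]; simp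
      have h2 : ∑ i ∈ Finset.Iic h, A i j ≤ colSum A j :=
        Finset.sum_le_sum_of_subset (Finset.subset_univ _)
      omega
    calc ∑ i ∈ Finset.Iic h, rowSum A i = ∑ j, ∑ i ∈ Finset.Iic h, A i j := Finset.sum_comm
      _ ≤ ∑ j, ∑ i ∈ Finset.Iic h, (if (i:ℕ) + 1 ≤ colSum A j then 1 else 0) :=
          Finset.sum_le_sum fun j _ => key j
      _ = ∑ i ∈ Finset.Iic h, conjTuple m (colSum A) i := by
          rw [Finset.sum_comm]
          exact Finset.sum_congr rfl fun i _ => (conj_as_sum m _ i).symm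
  · rw [total_eq A, conj_total m (colSum A) (colSum_le A hA)]

lemma base_matrix {m n : ℕ} (c : Fin n → ℕ) (hc : ∀ j, c j ≤ m) :
    ∃ A : Matrix (Fin m) (Fin n) ℕ, ZeroOne A ∧
      (∀ i, rowSum A i = conjTuple m c i) ∧ (∀ j, colSum A j = c j) := by
  refine ⟨fun i j => if (i:ℕ) + 1 ≤ c j then 1 else 0, fun i j => by dsimp; split <;> omega,
    fun i => ?_, fun j => ?_⟩
  · rw [conj_as_sum]; rfl
  · show (∑ i : Fin m, if (i:ℕ) + 1 ≤ c j then 1 else 0) = c j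
    rw [← Finset.card_filter]
    have h2 : Finset.univ.filter (fun i : Fin m => (i:ℕ) + 1 ≤ c j)
        = Finset.univ.filter (fun i : Fin m => (i:ℕ) < c j) := by
      ext x; simp only [Finset.mem_filter, Finset.mem_univ, true_and]; omega
    rw [h2, cardLt m (c j) (hc j)]

/-- Robin-Hood update of a tuple: take one from position `k`, give one to position `l`. -/
def upd {m : ℕ} (s : Fin m → ℕ) (k l : Fin m) (i : Fin m) : ℕ :=
  if i = k then s i - 1 else if i = l then s i + 1 else s i

lemma swap_matrix {m n : ℕ} (A : Matrix (Fin m) (Fin n) ℕ) (hA : ZeroOne A)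
    (k l : Fin m) (hkl : k ≠ l) (hlt : rowSum A l < rowSum A k) :
    ∃ A' : Matrix (Fin m) (Fin n) ℕ, ZeroOne A' ∧
      (∀ i, rowSum A' i = upd (rowSum A) k l i) ∧ (∀ j, colSum A' j = colSum A j) := by
  have hex : ∃ j0, A l j0 < A k j0 := by
    by_contra hcon
    push_neg at hcon
    exact absurd (Finset.sum_le_sum fun j _ => hcon j) (not_le.2 hlt)
  obtain ⟨j0, hj0⟩ := hex
  have hk1 : A k j0 = 1 := by have := hA k j0; omega
  have hl0 : A l j0 = 0 := by have := hA k j0; omega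
  set A' : Matrix (Fin m) (Fin n) ℕ :=
    fun i j => if i = k ∧ j = j0 then 0 else if i = l ∧ j = j0 then 1 else A i j with hA'
  have hoff : ∀ i j, j ≠ j0 → A' i j = A i j := by
    intro i j hj; rw [hA']; simp [hj]
  have hAk : A' k j0 = 0 := by rw [hA']; simp
  have hAl : A' l j0 = 1 := by rw [hA']; simp [hkl.symm]
  have hAm : ∀ i, i ≠ k → i ≠ l → A' i j0 = A i j0 := by
    intro i h1 h2; rw [hA']; simp [h1, h2]
  have hrowsplit : ∀ B : Matrix (Fin m) (Fin n) ℕ, ∀ i,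
      rowSum B i = B i j0 + ∑ j ∈ Finset.univ.erase j0, B i j :=
    fun B i => (Finset.add_sum_erase _ (B i) (Finset.mem_univ j0)).symm
  have hrowrest : ∀ i, ∑ j ∈ Finset.univ.erase j0, A' i j = ∑ j ∈ Finset.univ.erase j0, A i j :=
    fun i => Finset.sum_congr rfl fun j hj => hoff i j (Finset.ne_of_mem_erase hj)
  refine ⟨A', ?_, ?_, ?_⟩
  · intro i j; rw [hA']; dsimp; split_ifs <;> first | omega | exact hA i j
  · intro i
    unfold upd
    rcases eq_or_ne i k with rfl | hik
    · rw [if_pos rfl, hrowsplit A', hrowsplit A, hrowrest, hAk, hk1]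
      omega
    · rcases eq_or_ne i l with rfl | hil
      · rw [if_neg hik, if_pos rfl, hrowsplit A', hrowsplit A, hrowrest, hAl, hl0]
        omega
      · rw [if_neg hik, if_neg hil, hrowsplit A', hrowsplit A, hrowrest, hAm i hik hil]
  · intro j
    rcases eq_or_ne j j0 with rfl | hjj
    · have hlk : l ∈ Finset.univ.erase k := Finset.mem_erase.2 ⟨hkl.symm, Finset.mem_univ l⟩
      have hcolsplit : ∀ B : Matrix (Fin m) (Fin n) ℕ,
          colSum B j = B k j + (B l j + ∑ i ∈ (Finset.univ.erase k).erase l, B i j) := by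
        intro B
        unfold colSum
        rw [← Finset.add_sum_erase _ (fun i => B i j) (Finset.mem_univ k),
          ← Finset.add_sum_erase _ (fun i => B i j) hlk]
      have hcolrest : ∑ i ∈ (Finset.univ.erase k).erase l, A' i j
          = ∑ i ∈ (Finset.univ.erase k).erase l, A i j := by
        refine Finset.sum_congr rfl fun i hi => ?_
        exact hAm i (Finset.ne_of_mem_erase (Finset.mem_of_mem_erase hi))
          (Finset.ne_of_mem_erase hi)
      rw [hcolsplit A', hcolsplit A, hcolrest, hAk, hAl, hk1, hl0]
      omega
    · exact Finset.sum_congr rfl fun i _ => hoff i j hjj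

def psum {m : ℕ} (f : Fin m → ℕ) (h : Fin m) : ℕ := ∑ i ∈ Finset.Iic h, f i

def dist' {m : ℕ} (r s : Fin m → ℕ) : ℕ := ∑ h, (psum s h - psum r h)

lemma antitone_of_adjacent {m : ℕ} (f : Fin m → ℕ)
    (h : ∀ a b : Fin m, (b : ℕ) = (a : ℕ) + 1 → f b ≤ f a) : Antitone f := by
  cases m with
  | zero => intro a; exact a.elim0
  | succ m' =>
    rw [Fin.antitone_iff_succ_le]
    intro i
    exact h _ _ (by simp)

lemma step {m : ℕ} (r s : Fin m → ℕ) (hr : Antitone r) (hs : Antitone s)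
    (hmaj : MajorizedBy r s) (hne : r ≠ s) :
    ∃ k l : Fin m, k ≠ l ∧ s l < s k ∧ Antitone (upd s k l) ∧
      MajorizedBy r (upd s k l) ∧ dist' r (upd s k l) < dist' r s := by
  obtain ⟨m', rfl⟩ : ∃ m', m = m' + 1 := by
    cases m with
    | zero => exact absurd (funext fun i => i.elim0) hne
    | succ m' => exact ⟨m', rfl⟩
  classical
  have hD : (Finset.univ.filter fun i => r i ≠ s i).Nonempty := by
    obtain ⟨i, hi⟩ := Function.ne_iff.1 hne
    exact ⟨i, by simp [hi]⟩
  set k0 := Finset.min' _ hD with hk0def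
  have hk0 : r k0 ≠ s k0 := (Finset.mem_filter.1 (Finset.min'_mem _ hD)).2
  have hbefore : ∀ i, i < k0 → r i = s i := by
    intro i hi
    by_contra hcon
    exact absurd (Finset.min'_le _ i (by simp [hcon])) (not_le.2 hi)
  have hprefix : ∑ i ∈ Finset.Iio k0, r i = ∑ i ∈ Finset.Iio k0, s i :=
    Finset.sum_congr rfl fun i hi => hbefore i (Finset.mem_Iio.1 hi)
  have hks : r k0 < s k0 := by
    have h1 := hmaj.1 k0
    rw [← Finset.Iio_insert, Finset.sum_insert (by simp), Finset.sum_insert (by simp),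
      hprefix] at h1
    omega
  have hL : (Finset.univ.filter fun i => s i < r i).Nonempty := by
    by_contra hcon
    rw [Finset.filter_nonempty_iff] at hcon
    push_neg at hcon
    have : ∑ i, r i < ∑ i, s i :=
      Finset.sum_lt_sum (fun i _ => hcon i (Finset.mem_univ i)) ⟨k0, Finset.mem_univ _, hks⟩
    exact absurd hmaj.2 this.ne
  set l0 := Finset.min' _ hL with hl0def
  have hl0 : s l0 < r l0 := (Finset.mem_filter.1 (Finset.min'_mem _ hL)).2
  have hlbefore : ∀ i, i < l0 → r i ≤ s i := by
    intro i hi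
    by_contra hcon
    have h2 : s i < r i := not_le.1 hcon
    exact absurd (Finset.min'_le _ i (by simp [h2])) (not_le.2 hi)
  have hk0l0 : k0 < l0 := by
    rcases lt_trichotomy k0 l0 with h | h | h
    · exact h
    · exfalso; rw [← h] at hl0; omega
    · exfalso; have := hbefore l0 h; omega
  have hrkl : r l0 ≤ r k0 := hr hk0l0.le
  have hgap : s l0 + 2 ≤ s k0 := by omega
  have hKne : (Finset.univ.filter fun i => s i = s k0).Nonempty := ⟨k0, by simp⟩
  set k := Finset.max' _ hKne with hkdef
  have hsk : s k = s k0 := (Finset.mem_filter.1 (Finset.max'_mem _ hKne)).2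
  have hk0k : k0 ≤ k := Finset.le_max' _ k0 (by simp)
  have hafterk : ∀ i, k < i → s i < s k0 := by
    intro i hi
    have h1 : s i ≤ s k0 := hsk ▸ hs hi.le
    rcases h1.lt_or_eq with h | h
    · exact h
    · exact absurd (Finset.le_max' _ i (by simp [h])) (not_le.2 hi)
  have hLne : (Finset.univ.filter fun i => s i = s l0).Nonempty := ⟨l0, by simp⟩
  set l := Finset.min' _ hLne with hldef
  have hsl : s l = s l0 := (Finset.mem_filter.1 (Finset.min'_mem _ hLne)).2
  have hll0 : l ≤ l0 := Finset.min'_le _ l0 (by simp)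
  have hbeforel : ∀ i, i < l → s l0 < s i := by
    intro i hi
    have h1 : s l0 ≤ s i := hsl ▸ hs hi.le
    rcases h1.lt_or_eq with h | h
    · exact h
    · exact absurd (Finset.min'_le _ i (by simp [h.symm])) (not_le.2 hi)
  have hkl : k < l := by
    by_contra hcon
    have h2 : s k ≤ s l := hs (not_lt.1 hcon)
    rw [hsk, hsl] at h2
    omega
  have hs'k : upd s k l k = s k0 - 1 := by unfold upd; rw [if_pos rfl, hsk]
  have hs'l : upd s k l l = s l0 + 1 := by unfold upd; rw [if_neg hkl.ne', if_pos rfl, hsl]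
  have hs'other : ∀ i, i ≠ k → i ≠ l → upd s k l i = s i := fun i h1 h2 => by
    unfold upd; rw [if_neg h1, if_neg h2]
  have hanti : Antitone (upd s k l) := by
    apply antitone_of_adjacent
    intro a b hab
    have haltb : a < b := by rw [Fin.lt_def]; omega
    rcases eq_or_ne a k with hak | hak
    · rcases eq_or_ne b l with hbl | hbl
      · rw [hak, hbl, hs'k, hs'l]; omega
      · have hbk : b ≠ k := by rw [← hak]; exact haltb.ne'
        have h2 : k < b := by rw [← hak]; exact haltb
        rw [hak, hs'k, hs'other b hbk hbl]
        have := hafterk b h2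
        omega
    · rcases eq_or_ne a l with hal | hal
      · have hka : k < a := by rw [hal]; exact hkl
        have hbl : b ≠ l := by rw [← hal]; exact haltb.ne'
        rw [hal, hs'l, hs'other b (hka.trans haltb).ne' hbl]
        have h3 : s b ≤ s a := hs haltb.le
        rw [hal, hsl] at h3
        omega
      · rw [hs'other a hak hal]
        rcases eq_or_ne b k with hbk | hbk
        · rw [hbk, hs'k]
          have h4 : s b ≤ s a := hs haltb.le
          rw [hbk, hsk] at h4
          omega
        · rcases eq_or_ne b l with hbl | hbl
          · rw [hbl, hs'l]
            have hal2 : a < l := by rw [← hbl]; exact haltb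
            have := hbeforel a hal2
            omega
          · rw [hs'other b hbk hbl]
            exact hs haltb.le
  have hp1 : ∀ h, h < k → psum (upd s k l) h = psum s h := by
    intro h hh
    unfold psum
    refine Finset.sum_congr rfl fun i hi => ?_
    have h1 : i ≤ h := Finset.mem_Iic.1 hi
    exact hs'other i (h1.trans_lt hh).ne (h1.trans_lt (hh.trans hkl)).ne
  have hp2 : ∀ h, k ≤ h → h < l → psum (upd s k l) h = psum s h - 1 := by
    intro h h1 h2
    unfold psum
    have hk_mem : k ∈ Finset.Iic h := Finset.mem_Iic.2 h1
    rw [← Finset.add_sum_erase _ (upd s k l) hk_mem, ← Finset.add_sum_erase _ s hk_mem]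
    have hrest : ∑ i ∈ (Finset.Iic h).erase k, upd s k l i
        = ∑ i ∈ (Finset.Iic h).erase k, s i := by
      refine Finset.sum_congr rfl fun i hi => hs'other i (Finset.ne_of_mem_erase hi) ?_
      have h3 : i ≤ h := Finset.mem_Iic.1 (Finset.mem_of_mem_erase hi)
      exact (h3.trans_lt h2).ne
    rw [hrest, hs'k, hsk]
    omega
  have hp3 : ∀ h, l ≤ h → psum (upd s k l) h = psum s h := by
    intro h h1
    unfold psum
    have hk_mem : k ∈ Finset.Iic h := Finset.mem_Iic.2 (hkl.le.trans h1)
    have hl_mem : l ∈ (Finset.Iic h).erase k := Finset.mem_erase.2 ⟨hkl.ne', Finset.mem_Iic.2 h1⟩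
    rw [← Finset.add_sum_erase _ (upd s k l) hk_mem, ← Finset.add_sum_erase _ s hk_mem,
      ← Finset.add_sum_erase _ (upd s k l) hl_mem, ← Finset.add_sum_erase _ s hl_mem]
    have hrest : ∑ i ∈ ((Finset.Iic h).erase k).erase l, upd s k l i
        = ∑ i ∈ ((Finset.Iic h).erase k).erase l, s i := by
      refine Finset.sum_congr rfl fun i hi => hs'other i
        (Finset.ne_of_mem_erase (Finset.mem_of_mem_erase hi)) (Finset.ne_of_mem_erase hi)
    rw [hrest, hs'k, hs'l, hsk, hsl]
    omega
  have hstrict : ∀ h, k ≤ h → h < l → psum r h + 1 ≤ psum s h := by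
    intro h h1 h2
    have hsplitIic : Finset.Iic k0 ∪ Finset.Ioc k0 h = Finset.Iic h := by
      ext x
      simp only [Finset.mem_union, Finset.mem_Iic, Finset.mem_Ioc, Fin.le_def, Fin.lt_def]
      have h3 : (k0 : ℕ) ≤ (h : ℕ) := Fin.le_def.1 (hk0k.trans h1)
      omega
    have hdisj : Disjoint (Finset.Iic k0) (Finset.Ioc k0 h) := by
      rw [Finset.disjoint_left]
      intro x hx1 hx2
      exact absurd (Finset.mem_Iic.1 hx1) (not_le.2 (Finset.mem_Ioc.1 hx2).1)
    have e1 : ∀ f : Fin (m' + 1) → ℕ,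
        psum f h = ∑ i ∈ Finset.Iic k0, f i + ∑ i ∈ Finset.Ioc k0 h, f i := by
      intro f; unfold psum; rw [← hsplitIic, Finset.sum_union hdisj]
    rw [e1 r, e1 s]
    have e2 : ∑ i ∈ Finset.Iic k0, r i + 1 ≤ ∑ i ∈ Finset.Iic k0, s i := by
      rw [← Finset.Iio_insert, Finset.sum_insert (by simp), Finset.sum_insert (by simp), hprefix]
      omega
    have e3 : ∑ i ∈ Finset.Ioc k0 h, r i ≤ ∑ i ∈ Finset.Ioc k0 h, s i := by
      refine Finset.sum_le_sum fun i hi => ?_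
      exact hlbefore i (((Finset.mem_Ioc.1 hi).2.trans_lt h2).trans_le hll0)
    omega
  have hsle : ∀ h, psum (upd s k l) h ≤ psum s h := by
    intro h
    rcases lt_or_ge h k with hh | hh
    · rw [hp1 h hh]
    · rcases lt_or_ge h l with hh2 | hh2
      · rw [hp2 h hh hh2]; omega
      · rw [hp3 h hh2]
  refine ⟨k, l, hkl.ne, by rw [hsk, hsl]; omega, hanti, ⟨?_, ?_⟩, ?_⟩
  · intro h
    show psum r h ≤ psum (upd s k l) h
    rcases lt_or_ge h k with hh | hh
    · rw [hp1 h hh]; exact hmaj.1 h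
    · rcases lt_or_ge h l with hh2 | hh2
      · rw [hp2 h hh hh2]
        have := hstrict h hh hh2
        omega
      · rw [hp3 h hh2]; exact hmaj.1 h
  · have hu : ∀ f : Fin (m' + 1) → ℕ, ∑ i, f i = psum f (Fin.last m') := by
      intro f
      unfold psum
      apply Finset.sum_congr _ fun i _ => rfl
      ext x
      simp [Fin.le_last]
    rw [hu (upd s k l), hp3 _ (Fin.le_last l), ← hu s]
    exact hmaj.2
  · unfold dist'
    apply Finset.sum_lt_sum
    · intro h _
      exact Nat.sub_le_sub_right (hsle h) _
    · refine ⟨k, Finset.mem_univ k, ?_⟩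
      rw [hp2 k le_rfl hkl]
      have := hstrict k le_rfl hkl
      omega


lemma descend {m n : ℕ} (c : Fin n → ℕ) :
    ∀ d : ℕ, ∀ r s : Fin m → ℕ, Antitone r → Antitone s → MajorizedBy r s → dist' r s ≤ d →
    (∃ A : Matrix (Fin m) (Fin n) ℕ, ZeroOne A ∧ (∀ i, rowSum A i = s i) ∧
      (∀ j, colSum A j = c j)) →
    ∃ A : Matrix (Fin m) (Fin n) ℕ, ZeroOne A ∧ (∀ i, rowSum A i = r i) ∧
      (∀ j, colSum A j = c j) := by
  intro d
  induction d with
  | zero =>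
    intro r s hr hs hmaj hd hA
    by_cases hrs : r = s
    · subst hrs; exact hA
    · obtain ⟨k, l, _, _, _, _, hlt⟩ := step r s hr hs hmaj hrs
      omega
  | succ d ih =>
    intro r s hr hs hmaj hd hA
    by_cases hrs : r = s
    · subst hrs; exact hA
    · obtain ⟨k, l, hkl, hval, hanti, hmaj', hlt⟩ := step r s hr hs hmaj hrs
      obtain ⟨A, hA0, hArow, hAcol⟩ := hA
      have hval' : rowSum A l < rowSum A k := by rw [hArow, hArow]; exact hval
      obtain ⟨A', h0', hrow', hcol'⟩ := swap_matrix A hA0 k l hkl hval'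
      refine ih r (upd s k l) hr hanti hmaj' (by omega)
        ⟨A', h0', ?_, fun j => (hcol' j).trans (hAcol j)⟩
      intro i
      rw [hrow' i]
      unfold upd
      split_ifs <;> rw [hArow i]

lemma exists_monotone_matrix {m n : ℕ} (r : Fin m → ℕ) (c : Fin n → ℕ) (hr : Antitone r)
    (hc : Antitone c) (hcm : ∀ j, c j ≤ m) (hmaj : MajorizedBy r (conjTuple m c)) :
    ∃ A : Matrix (Fin m) (Fin n) ℕ, ZeroOne A ∧ MonotoneMat A ∧
      (∀ i, rowSum A i = r i) ∧ (∀ j, colSum A j = c j) := by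
  obtain ⟨A, h0, hrow, hcol⟩ := descend c (dist' r (conjTuple m c)) r (conjTuple m c) hr
    (conj_antitone m c) hmaj le_rfl (base_matrix c hcm)
  refine ⟨A, h0, ⟨?_, ?_⟩, hrow, hcol⟩
  · rw [funext hrow]; exact hr
  · rw [funext hcol]; exact hc


/-- The minimum of the line sum objective over monotone (0,1)-matrices equals
the minimum over pairs of nonincreasing tuples (r, c) with c bounded by m such
that r is majorized by the conjugate of c. -/
theorem monotone_min_eq_tuple_min (m n : ℕ)
    (f : Fin m → ℕ → ℤ) (g : Fin n → ℕ → ℤ) :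
    sInf {v : ℤ | ∃ A : Matrix (Fin m) (Fin n) ℕ, ZeroOne A ∧ MonotoneMat A ∧
        v = (∑ i, f i (rowSum A i)) + (∑ j, g j (colSum A j))} =
    sInf {v : ℤ | ∃ r : Fin m → ℕ, ∃ c : Fin n → ℕ,
        Antitone r ∧ Antitone c ∧ (∀ j, c j ≤ m) ∧
        MajorizedBy r (conjTuple m c) ∧
        v = (∑ i, f i (r i)) + (∑ j, g j (c j))} := by
  have hset : {v : ℤ | ∃ A : Matrix (Fin m) (Fin n) ℕ, ZeroOne A ∧ MonotoneMat A ∧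
        v = (∑ i, f i (rowSum A i)) + (∑ j, g j (colSum A j))} =
      {v : ℤ | ∃ r : Fin m → ℕ, ∃ c : Fin n → ℕ,
        Antitone r ∧ Antitone c ∧ (∀ j, c j ≤ m) ∧
        MajorizedBy r (conjTuple m c) ∧
        v = (∑ i, f i (r i)) + (∑ j, g j (c j))} := by
    ext v
    simp only [Set.mem_setOf_eq]
    constructor
    · rintro ⟨A, hA0, hAm, rfl⟩
      exact ⟨rowSum A, colSum A, hAm.1, hAm.2, colSum_le A hA0, matrix_majorized A hA0, rfl⟩
    · rintro ⟨r, c, hr, hc, hcm, hmaj, rfl⟩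
      obtain ⟨A, h0, hmono, hrow, hcol⟩ := exists_monotone_matrix r c hr hc hcm hmaj
      exact ⟨A, h0, hmono, by rw [funext hrow, funext hcol]⟩
  rw [hset]
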